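/- arXiv:1812.09661 — 8 statements merged into one kernel-verified Lean document; each statement's English description precedes it below -/
import Mathlib

section
/- Let A be a category and F : A ⥤ Cat a functor. Assume that every object p of the Grothendieck construction Grothendieck F admits a lax el-generic object q together with a morphism q ⟶ p whose fiber component is an isomorphism. Let M be the full subcategory of Grothendieck F spanned by the lax el-generic objects, and let P : M ⥤ A be the restriction to M of the forgetful functor Grothendieck.forget F. Then for every object W of A there is an equivalence of categories between the comma category CostructuredArrow P W and the category F.obj W. -/
open CategoryTheory

universe w₂ w₁ v u

namespace LaxFamilial

variable {A : Type u} [Category.{v} A]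

/-- An object `q` of the Grothendieck construction of `F : A ⥤ Cat` is *lax el-generic*
if for every pair of morphisms `p : q ⟶ b` and `r : c ⟶ b` whose fiber component of `r`
is an isomorphism, there is a unique `w : q ⟶ c` with `w ≫ r = p`, and moreover the fiber
component of any such `w` is an isomorphism whenever that of `p` is. -/
def LaxElGeneric (F : A ⥤ Cat.{w₂, w₁}) (q : Grothendieck F) : Prop :=
  ∀ ⦃b c : Grothendieck F⦄ (p : q ⟶ b) (r : c ⟶ b), IsIso r.fiber →
    (∃! w : q ⟶ c, w ≫ r = p) ∧
      ∀ w : q ⟶ c, w ≫ r = p → IsIso p.fiber → IsIso w.fiber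

section Aux

variable (F : A ⥤ Cat.{w₂, w₁}) (W : A)

private lemma hom_eq {X Y : CostructuredArrow
    (ObjectProperty.ι (LaxElGeneric F) ⋙ Grothendieck.forget F) W} (u : X ⟶ Y) :
    X.hom = (u.left.hom.base : X.left.obj.base ⟶ Y.left.obj.base) ≫ Y.hom :=
  (CostructuredArrow.w u).symm

private lemma obj_eq {X Y : CostructuredArrow
    (ObjectProperty.ι (LaxElGeneric F) ⋙ Grothendieck.forget F) W} (u : X ⟶ Y) :
    (F.map (X := X.left.obj.base) X.hom).toFunctor.obj X.left.obj.fiber =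
      (F.map (X := Y.left.obj.base) Y.hom).toFunctor.obj ((F.map u.left.hom.base).toFunctor.obj X.left.obj.fiber) := by
  rw [hom_eq F W u]
  exact Functor.congr_obj (congrArg Cat.Hom.toFunctor (F.map_comp _ _)) _

private def Phi :
    CostructuredArrow (ObjectProperty.ι (LaxElGeneric F) ⋙ Grothendieck.forget F) W ⥤
      F.obj W where
  obj X := (F.map (X := X.left.obj.base) X.hom).toFunctor.obj X.left.obj.fiber
  map {X Y} u := eqToHom (obj_eq F W u) ≫ (F.map (X := Y.left.obj.base) Y.hom).toFunctor.map u.left.hom.fiber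
  map_id X := by
    dsimp
    erw [eqToHom_map (F.map X.hom).toFunctor]
    exact eqToHom_trans _ _
  map_comp {X Y Z} u v := by
    dsimp
    simp only [Functor.map_comp, eqToHom_map, Category.assoc]
    rw [Functor.congr_hom (congrArg Cat.Hom.toFunctor (show F.map (X := Y.left.obj.base) Y.hom = F.map ((v.left.hom.base : _ ⟶ _) ≫ Z.hom) by
      exact congrArg F.map (hom_eq F W v))) u.left.hom.fiber]
    simp [Functor.congr_hom (congrArg Cat.Hom.toFunctor (F.map_comp (v.left.hom.base) Z.hom)) u.left.hom.fiber, eqToHom_map]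
    erw [eqToHom_map]
    exact eqToHom_trans_assoc _ _ _

private def toW (X : CostructuredArrow
    (ObjectProperty.ι (LaxElGeneric F) ⋙ Grothendieck.forget F) W) :
    X.left.obj ⟶ (⟨W, (Phi F W).obj X⟩ : Grothendieck F) where
  base := X.hom
  fiber := 𝟙 _

private lemma fac {X Y : CostructuredArrow
    (ObjectProperty.ι (LaxElGeneric F) ⋙ Grothendieck.forget F) W} (u : X ⟶ Y) :
    (ObjectProperty.ι (LaxElGeneric F)).map u.left ≫ toW F W Y =
      (⟨X.hom, (Phi F W).map u⟩ : X.left.obj ⟶ (⟨W, (Phi F W).obj Y⟩ : Grothendieck F)) := by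
  apply Grothendieck.ext
  case w_base => exact (hom_eq F W u).symm
  case w_fiber =>
    erw [Grothendieck.comp_fiber]
    simp [toW, Phi]
    exact eqToHom_trans_assoc _ _ _

private lemma phi_faithful : (Phi F W).Faithful where
  map_injective {X Y} u v h := by
    have hiso : IsIso (toW F W Y).fiber := by dsimp [toW]; exact IsIso.id _
    have key := (X.left.property (⟨X.hom, (Phi F W).map u⟩ : X.left.obj ⟶ (⟨W, (Phi F W).obj Y⟩ : Grothendieck F)) (toW F W Y) hiso).1
    have h1 : (ObjectProperty.ι (LaxElGeneric F)).map u.left =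
        (ObjectProperty.ι (LaxElGeneric F)).map v.left :=
      key.unique (fac F W u) (by rw [fac F W v, h])
    exact CommaMorphism.ext (InducedCategory.hom_ext h1) (Subsingleton.elim _ _)

private lemma phi_full : (Phi F W).Full where
  map_surjective {X Y} φ := by
    have hiso : IsIso (toW F W Y).fiber := by dsimp [toW]; exact IsIso.id _
    obtain ⟨w, hw, -⟩ := (X.left.property (⟨X.hom, φ⟩ : X.left.obj ⟶ (⟨W, (Phi F W).obj Y⟩ : Grothendieck F)) (toW F W Y) hiso).1
    have hbase : (w.base : _ ⟶ _) ≫ Y.hom = X.hom := congrArg Grothendieck.Hom.base hw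
    have hbase' : (ObjectProperty.ι (LaxElGeneric F) ⋙ Grothendieck.forget F).map
        (ObjectProperty.homMk w) ≫ Y.hom = X.hom := hbase
    refine ⟨CostructuredArrow.homMk (ObjectProperty.homMk w) hbase', ?_⟩
    have hw' : (ObjectProperty.ι (LaxElGeneric F)).map
        (CostructuredArrow.homMk (ObjectProperty.homMk w) hbase').left ≫ toW F W Y =
        (⟨X.hom, φ⟩ : X.left.obj ⟶ (⟨W, (Phi F W).obj Y⟩ : Grothendieck F)) := hw
    have h2 := Grothendieck.congr
      ((fac F W (CostructuredArrow.homMk (ObjectProperty.homMk w) hbase')).symm.trans hw')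
    simp at h2; exact h2.trans (Category.id_comp φ)

end Aux

theorem costructuredArrow_equivalence_of_laxElGeneric_factorizations
    (F : A ⥤ Cat.{w₂, w₁})
    (hgen : ∀ p : Grothendieck F, ∃ (q : Grothendieck F) (_ : LaxElGeneric F q)
      (f : q ⟶ p), IsIso f.fiber)
    (W : A) :
    Nonempty
      (CostructuredArrow
          (ObjectProperty.ι (LaxElGeneric F) ⋙ Grothendieck.forget F) W ≌
        F.obj W) := by
  haveI := phi_faithful F W
  haveI := phi_full F W
  haveI : (Phi F W).EssSurj := by
    constructor
    intro x
    obtain ⟨q, hq, f, hiso⟩ := hgen ⟨W, x⟩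
    exact ⟨CostructuredArrow.mk
      (Y := (⟨q, hq⟩ : ObjectProperty.FullSubcategory (LaxElGeneric F))) f.base, ⟨@asIso _ _ _ _ f.fiber hiso⟩⟩
  haveI : (Phi F W).IsEquivalence := {}
  exact ⟨(Phi F W).asEquivalence⟩

end LaxFamilial
end

section
/- Let A be a category and F : A ⥤ Cat a functor. Let M be the full subcategory of Grothendieck F spanned by the lax el-generic objects, and let P : M ⥤ A be the restriction to M of the forgetful functor Grothendieck.forget F. Then for every object W of A there exists a fully faithful functor Λ_W : CostructuredArrow P W ⥤ F.obj W whose action on objects sends a pair (q, f : P.obj q ⟶ W), where q = (a, x) is a lax el-generic object of Grothendieck F, to the object (F.map f).obj x of F.obj W. -/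
open CategoryTheory

universe w₂ w₁ v u

namespace LaxFamilial

variable {A : Type u} [Category.{v} A]

section Aux

variable (F : A ⥤ Cat.{w₂, w₁}) (W : A)

local notation "P" => ObjectProperty.ι (LaxElGeneric F) ⋙ Grothendieck.forget F

lemma obj_eq_s1 {s t : CostructuredArrow P W} (u : s ⟶ t) :
    (F.map s.hom).toFunctor.obj s.left.obj.fiber =
      (F.map t.hom).toFunctor.obj ((F.map u.left.hom.base).toFunctor.obj s.left.obj.fiber) := by
  have h : u.left.hom.base ≫ t.hom = s.hom := CostructuredArrow.w u
  rw [← h]; erw [F.map_comp]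
  rfl

lemma eqToHom_comp_map_eqToHom {C D : Type*} [Category C] [Category D] (G : C ⥤ D) {X Y : C}
    (p : G.obj X = G.obj Y) (q : Y = X) : eqToHom p ≫ G.map (eqToHom q) = 𝟙 _ := by
  subst q; simp

def Lam : CostructuredArrow P W ⥤ F.obj W where
  obj s := (F.map s.hom).toFunctor.obj s.left.obj.fiber
  map {s t} u := eqToHom (obj_eq_s1 F W u) ≫ (F.map t.hom).toFunctor.map u.left.hom.fiber
  map_id s := by
    change eqToHom _ ≫ (F.map s.hom).toFunctor.map (Grothendieck.Hom.fiber (𝟙 s.left.obj)) = _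
    erw [Grothendieck.id_fiber]
    exact eqToHom_comp_map_eqToHom _ _ _
  map_comp {s t r} u v := by
    change eqToHom _ ≫ (F.map r.hom).toFunctor.map (Grothendieck.Hom.fiber (u.left ≫ v.left).hom) = _
    erw [Grothendieck.comp_fiber]
    have h : v.left.hom.base ≫ r.hom = t.hom := CostructuredArrow.w v
    have h2 : (F.map v.left.hom.base ≫ F.map r.hom).toFunctor = (F.map t.hom).toFunctor := by erw [← F.map_comp, h]; rfl
    have := Functor.congr_hom h2 u.left.hom.fiber
    simp only [Functor.map_comp, eqToHom_map, Cat.Hom.comp_map] at this ⊢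
    erw [Functor.map_comp (F.map r.hom).toFunctor, Functor.map_comp (F.map r.hom).toFunctor, this]
    erw [eqToHom_map (F.map r.hom).toFunctor]
    simp only [Category.assoc]
    erw [eqToHom_trans_assoc, Category.assoc, Category.assoc, eqToHom_trans_assoc]
    rfl


lemma lam_full : (Lam F W).Full := by
  constructor
  intro s t h
  let b : Grothendieck F := ⟨W, (F.map t.hom).toFunctor.obj t.left.obj.fiber⟩
  let p : s.left.obj ⟶ b := ⟨s.hom, h⟩
  let r : t.left.obj ⟶ b := ⟨t.hom, 𝟙 _⟩
  have hiso : IsIso r.fiber := by exact IsIso.id _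
  obtain ⟨⟨w, hw, -⟩, -⟩ := s.left.property p r hiso
  have hbase : w.base ≫ t.hom = s.hom := congrArg Grothendieck.Hom.base hw
  refine ⟨CostructuredArrow.homMk (ObjectProperty.homMk w) hbase, ?_⟩
  have hf := Grothendieck.congr hw
  rw [Grothendieck.comp_fiber] at hf
  change eqToHom _ ≫ (F.map t.hom).toFunctor.map w.fiber ≫ 𝟙 _ = eqToHom _ ≫ h at hf
  rw [Category.comp_id] at hf
  change eqToHom _ ≫ (F.map t.hom).toFunctor.map w.fiber = h
  erw [eqToHom_comp_iff] at hf ⊢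
  rw [hf]
  erw [eqToHom_trans_assoc]

lemma lam_faithful : (Lam F W).Faithful := by
  constructor
  intro s t u v huv
  let b : Grothendieck F := ⟨W, (F.map t.hom).toFunctor.obj t.left.obj.fiber⟩
  let r : t.left.obj ⟶ b := ⟨t.hom, 𝟙 _⟩
  have hiso : IsIso r.fiber := by exact IsIso.id _
  change eqToHom _ ≫ (F.map t.hom).toFunctor.map u.left.hom.fiber
    = eqToHom _ ≫ (F.map t.hom).toFunctor.map v.left.hom.fiber at huv
  rw [eqToHom_comp_iff] at huv
  have hcomp : (show s.left.obj ⟶ t.left.obj from u.left.hom) ≫ r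
      = (show s.left.obj ⟶ t.left.obj from v.left.hom) ≫ r := by
    apply Grothendieck.ext
    case w_base =>
      exact (CostructuredArrow.w u).trans (CostructuredArrow.w v).symm
    case w_fiber =>
      rw [Grothendieck.comp_fiber, Grothendieck.comp_fiber]
      change eqToHom _ ≫ eqToHom _ ≫ (F.map t.hom).toFunctor.map u.left.hom.fiber ≫ 𝟙 _
        = eqToHom _ ≫ (F.map t.hom).toFunctor.map v.left.hom.fiber ≫ 𝟙 _
      rw [huv]
      simp
      erw [eqToHom_trans_assoc, eqToHom_trans_assoc]
  obtain ⟨⟨w, -, hu⟩, -⟩ := s.left.property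
    ((show s.left.obj ⟶ t.left.obj from v.left.hom) ≫ r) r hiso
  have : (show s.left.obj ⟶ t.left.obj from u.left.hom)
      = (show s.left.obj ⟶ t.left.obj from v.left.hom) := by
    rw [hu _ hcomp, hu _ rfl]
  apply CostructuredArrow.hom_ext
  exact InducedCategory.hom_ext this

end Aux

theorem exists_fullyFaithful_comparison (F : A ⥤ Cat.{w₂, w₁}) (W : A) :
    ∃ Λ : CostructuredArrow
        (ObjectProperty.ι (LaxElGeneric F) ⋙ Grothendieck.forget F) W ⥤
        F.obj W,
      Λ.Full ∧ Λ.Faithful ∧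
        ∀ s : CostructuredArrow
            (ObjectProperty.ι (LaxElGeneric F) ⋙ Grothendieck.forget F) W,
          Λ.obj s = (F.map s.hom).toFunctor.obj s.left.obj.fiber :=
  ⟨Lam F W, lam_full F W, lam_faithful F W, fun _ => rfl⟩

end LaxFamilial
end

section
/- Let A be a category and F : A ⥤ Cat a functor. If (a, x) and (c, z) are lax el-generic objects of Grothendieck F and u : (a, x) ⟶ (c, z) is a morphism of Grothendieck F whose fiber component is an isomorphism, then u is an isomorphism in Grothendieck F. -/
open CategoryTheory

universe w₂ w₁ v u

namespace LaxFamilial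

variable {A : Type u} [Category.{v} A]

/-- Every opcartesian morphism between lax el-generic objects is an isomorphism. -/
theorem isIso_of_opcartesian_between_laxElGeneric (F : A ⥤ Cat.{w₂, w₁})
    {q q' : Grothendieck F} (hq : LaxElGeneric F q) (hq' : LaxElGeneric F q')
    (u : q ⟶ q') (hu : IsIso u.fiber) : IsIso u := by
  obtain ⟨⟨w, hw, _⟩, _⟩ := hq' (𝟙 q') u hu
  obtain ⟨⟨w', hw', huniq⟩, _⟩ := hq u u hu
  refine ⟨w, ?_, hw⟩
  have h1 : u ≫ w ≫ u = u := by rw [hw, Category.comp_id]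
  have := huniq (u ≫ w) (by simp only [Category.assoc, h1])
  rw [this, huniq (𝟙 q) (Category.id_comp u)]

end LaxFamilial
end

section
/- Let C be a bicategory with 1-cells f : a ⟶ b, g : c ⟶ b, h : a ⟶ c and a 2-cell ν : f ⟶ h ≫ g such that (h, ν) is a strong mixed left lifting of f through g. Then for every 1-cell k : a ⟶ c and every 2-cell ζ : h ⟶ k there exists a unique 2-cell λ : k ⟶ h such that ζ ≫ λ = 𝟙 h. (Equivalently, (h, (ρ_h)⁻¹), where ρ_h : h ≫ 𝟙 c ≅ h is the right unitor, is a strong mixed left lifting of h through the identity 1-cell 𝟙 c.) -/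
open CategoryTheory Bicategory

universe w v u

namespace MixedLifting

variable {C : Type u} [Bicategory.{w, v} C]

/-- `(h, ν)` is a mixed left lifting of `f` through `g` if every 2-cell `ψ : f ⟶ k ≫ g`
factors uniquely through `ν` via a 2-cell `k ⟶ h` (in the reversed direction). -/
def IsMixedLeftLifting {a b c : C} (f : a ⟶ b) (g : c ⟶ b) (h : a ⟶ c)
    (ν : f ⟶ h ≫ g) : Prop :=
  ∀ (k : a ⟶ c) (ψ : f ⟶ k ≫ g), ∃! l : k ⟶ h, ν = ψ ≫ (l ▷ g)

/-- A mixed left lifting is strong if moreover `h` is subterminal in the hom-category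
`C(a, c)`, i.e. any two 2-cells into `h` are equal. -/
def IsStrongMixedLeftLifting {a b c : C} (f : a ⟶ b) (g : c ⟶ b) (h : a ⟶ c)
    (ν : f ⟶ h ≫ g) : Prop :=
  IsMixedLeftLifting f g h ν ∧ ∀ (k : a ⟶ c) (σ τ : k ⟶ h), σ = τ

theorem strongMixedLeftLifting_self {a b c : C} {f : a ⟶ b} {g : c ⟶ b} {h : a ⟶ c}
    {ν : f ⟶ h ≫ g} (hl : IsStrongMixedLeftLifting f g h ν) :
    (∀ (k : a ⟶ c) (ζ : h ⟶ k), ∃! l : k ⟶ h, ζ ≫ l = 𝟙 h) ∧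
      IsStrongMixedLeftLifting h (𝟙 c) h (ρ_ h).inv := by
  obtain ⟨lift, sub⟩ := hl
  have exinv : ∀ (k : a ⟶ c) (ζ : h ⟶ k), ∃! l : k ⟶ h, ζ ≫ l = 𝟙 h := by
    intro k ζ
    obtain ⟨l, hl1, -⟩ := lift k (ν ≫ (ζ ▷ g))
    obtain ⟨m, -, hm⟩ := lift h ν
    refine ⟨l, ?_, fun y _ => sub k y l⟩
    have h1 : ν = ν ≫ ((ζ ≫ l) ▷ g) := by
      rw [comp_whiskerRight]; simpa using hl1
    have h2 := hm (ζ ≫ l) h1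
    have h3 := hm (𝟙 h) (by simp)
    show ζ ≫ l = 𝟙 h
    rw [h2, h3]
  refine ⟨exinv, ?_, sub⟩
  intro k ψ
  obtain ⟨l, hl1, -⟩ := exinv k (ψ ≫ (ρ_ k).hom)
  refine ⟨l, ?_, fun y _ => sub k y l⟩
  have : l ▷ 𝟙 c = (ρ_ k).hom ≫ l ≫ (ρ_ h).inv := by
    rw [← rightUnitor_naturality]; simp
  show (ρ_ h).inv = ψ ≫ l ▷ 𝟙 c
  rw [this]
  simp [← Category.assoc, hl1]

end MixedLifting
end

section
/- Let A and B be bicategories, T : A ⟶ B a pseudofunctor, a, b, c objects of A, X an object of B, δ : X ⟶ T.obj a and z : X ⟶ T.obj b 1-cells in B, f : a ⟶ c, g : b ⟶ c, h : a ⟶ b 1-cells in A, and α : δ ≫ T.map f ⟶ z ≫ T.map g, γ : δ ≫ T.map h ⟶ z, ν : f ⟶ h ≫ g 2-cells. If (h, γ, ν) is a universal factorization of α, then (h, γ) is a generic cell; that is, for every 1-cell k : a ⟶ b, every 2-cell φ : δ ≫ T.map k ⟶ z and every 2-cell λ : h ⟶ k such that γ equals the composite (δ ◁ T.map₂ λ)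 ≫ φ, there exists a 2-cell λ* : k ⟶ h such that φ = (δ ◁ T.map₂ λ*) ≫ γ and λ ≫ λ* = 𝟙 h. -/
open CategoryTheory Bicategory

universe w₁ v₁ u₁ w₂ v₂ u₂

namespace LaxGeneric

variable {A : Type u₁} [Bicategory.{w₁, v₁} A] {B : Type u₂} [Bicategory.{w₂, v₂} B]

/-- `(h, γ, ν)` is a universal factorization of the 2-cell `α : δ ≫ T.map f ⟶ z ≫ T.map g`:
the evident pasting of `ν` and `γ` equals `α`; 2-cells into `h` are distinguished by pasting
with `γ`; and any other factorization `(k, φ, ψ)` of `α` factors through `(h, γ, ν)`. -/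
def IsUniversalFactorization (T : Pseudofunctor A B) {a b c : A} {X : B}
    (δ : X ⟶ T.obj a) (z : X ⟶ T.obj b) (f : a ⟶ c) (g : b ⟶ c)
    (α : δ ≫ T.map f ⟶ z ≫ T.map g)
    (h : a ⟶ b) (γ : δ ≫ T.map h ⟶ z) (ν : f ⟶ h ≫ g) : Prop :=
  (α = (δ ◁ T.map₂ ν) ≫ (δ ◁ (T.mapComp h g).hom) ≫
      (α_ δ (T.map h) (T.map g)).inv ≫ (γ ▷ T.map g)) ∧
    (∀ (k : a ⟶ b) (ω τ : k ⟶ h),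
      (δ ◁ T.map₂ ω) ≫ γ = (δ ◁ T.map₂ τ) ≫ γ → ω = τ) ∧
    ∀ (k : a ⟶ b) (φ : δ ≫ T.map k ⟶ z) (ψ : f ⟶ k ≫ g),
      (α = (δ ◁ T.map₂ ψ) ≫ (δ ◁ (T.mapComp k g).hom) ≫
          (α_ δ (T.map k) (T.map g)).inv ≫ (φ ▷ T.map g)) →
        ∃ ψ' : k ⟶ h, φ = (δ ◁ T.map₂ ψ') ≫ γ ∧ ν = ψ ≫ (ψ' ▷ g)

/-- A universal factorization yields a generic cell `(h, γ)`. -/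
theorem genericCell_of_universalFactorization (T : Pseudofunctor A B) {a b c : A} {X : B}
    (δ : X ⟶ T.obj a) (z : X ⟶ T.obj b) (f : a ⟶ c) (g : b ⟶ c)
    (α : δ ≫ T.map f ⟶ z ≫ T.map g)
    (h : a ⟶ b) (γ : δ ≫ T.map h ⟶ z) (ν : f ⟶ h ≫ g)
    (huniv : IsUniversalFactorization T δ z f g α h γ ν) :
    ∀ (k : a ⟶ b) (φ : δ ≫ T.map k ⟶ z) (l : h ⟶ k),
      γ = (δ ◁ T.map₂ l) ≫ φ →
        ∃ l' : k ⟶ h, φ = (δ ◁ T.map₂ l') ≫ γ ∧ l ≫ l' = 𝟙 h := by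
  obtain ⟨h0, h1, h2⟩ := huniv
  intro k φ l hγ
  have key : α = (δ ◁ T.map₂ (ν ≫ (l ▷ g))) ≫ (δ ◁ (T.mapComp k g).hom) ≫
      (α_ δ (T.map k) (T.map g)).inv ≫ (φ ▷ T.map g) := by
    rw [h0, hγ]
    simp only [Pseudofunctor.map₂_whisker_right, Bicategory.whiskerLeft_comp, Category.assoc,
      Iso.inv_hom_id, Category.comp_id, comp_whiskerRight,
      associator_inv_naturality_middle_assoc, Bicategory.whiskerLeft_comp_assoc,
      Bicategory.whiskerLeft_comp, associator_inv_naturality_middle_assoc,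
      PrelaxFunctor.map₂_comp, whiskerLeft_inv_hom_assoc]
  obtain ⟨ψ', hφ, hν⟩ := h2 k φ (ν ≫ (l ▷ g)) key
  refine ⟨ψ', hφ, ?_⟩
  apply h1
  simp only [PrelaxFunctor.map₂_comp, Bicategory.whiskerLeft_comp, Category.assoc,
    ← hφ, ← hγ, PrelaxFunctor.map₂_id, Bicategory.whiskerLeft_id, Category.id_comp]

end LaxGeneric
end

section
/- Let A be a category and F : A ⥤ Type a functor. An object q of F.Elements is el-generic if and only if q is initial in its connected component; precisely, if and only if for every object r of F.Elements connected to q by a zigzag of morphisms there exists exactly one morphism q ⟶ r. -/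
open CategoryTheory

universe v u

namespace Familial

variable {A : Type u} [Category.{v} A]

/-- An object `q` of the category of elements of `F` is *el-generic* if for all objects
`r`, `s` and morphisms `f : q ⟶ s`, `g : r ⟶ s` there is exactly one morphism `q ⟶ r`. -/
def ElGeneric {F : A ⥤ Type v} (q : F.Elements) : Prop :=
  ∀ (r s : F.Elements), (q ⟶ s) → (r ⟶ s) → ∃! _ : q ⟶ r, True

/-- An object of the category of elements is el-generic iff it is initial in its
connected component. -/
theorem elGeneric_iff_initial_in_component (F : A ⥤ Type v) (q : F.Elements) :
    ElGeneric q ↔ ∀ r : F.Elements, Zigzag q r → ∃! _ : q ⟶ r, True := by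
  constructor
  · intro hq r hzz
    -- existence of some morphism q ⟶ r, by induction on the zigzag
    have hex : Nonempty (q ⟶ r) := by
      induction hzz with
      | refl => exact ⟨𝟙 q⟩
      | tail _ hzag ih =>
        rcases ih with ⟨f⟩
        rcases hzag with ⟨⟨g⟩⟩ | ⟨⟨g⟩⟩
        · exact ⟨f ≫ g⟩
        · exact ⟨(hq _ _ f g).exists.choose⟩
    rcases hex with ⟨f⟩
    exact hq r r f (𝟙 r)
  · intro h r s f g
    exact h r (Relation.ReflTransGen.tail (Relation.ReflTransGen.single (Or.inl ⟨f⟩))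
      (Or.inr ⟨g⟩))

end Familial
end

section
/- Let A be a category and F : A ⥤ Type a functor. If q and q' are el-generic objects of F.Elements, then every morphism f : q ⟶ q' is an isomorphism, and any two morphisms q ⟶ q' are equal. -/
open CategoryTheory

universe v u

namespace Familial

variable {A : Type u} [Category.{v} A]

/-- Any morphism between el-generic objects is an isomorphism, and is unique. -/
theorem elGeneric_morphism_isIso_and_unique {F : A ⥤ Type v} {q q' : F.Elements}
    (hq : ElGeneric q) (hq' : ElGeneric q') :
    (∀ f : q ⟶ q', IsIso f) ∧ ∀ f g : q ⟶ q', f = g := by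
  constructor
  · intro f
    obtain ⟨g, -, -⟩ := hq' q q' (𝟙 q') f
    obtain ⟨i, -, hi⟩ := hq q q (𝟙 q) (𝟙 q)
    obtain ⟨i', -, hi'⟩ := hq' q' q' (𝟙 q') (𝟙 q')
    exact ⟨g, by rw [hi (f ≫ g) trivial, hi (𝟙 q) trivial],
      by rw [hi' (g ≫ f) trivial, hi' (𝟙 q') trivial]⟩
  · intro f g
    obtain ⟨h, -, hh⟩ := hq q' q' f (𝟙 q')
    rw [hh f trivial, hh g trivial]

end Familial
end

section
/- Let A be a category with a terminal object ⊤ and T : A ⥤ B a functor. Then T is familial if and only if the canonical functor T₁ : A ⥤ Over (T.obj ⊤) — sending an object a to the object of the over category given by T.map (terminal.from a) : T.obj a ⟶ T.obj ⊤, and a morphism u : a ⟶ a' to the morphism of over objects with underlying morphism T.map u (which commutes over T.obj ⊤ by terminality) — has a left adjoint. -/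
open CategoryTheory CategoryTheory.Limits

universe v u₁ u₂

namespace Familial

variable {A : Type u₁} [Category.{v} A] {B : Type u₂} [Category.{v} B]

def IsFamilial (T : A ⥤ B) : Prop :=
  ∀ X : B, ∃ (ι : Type v) (P : ι → A),
    Nonempty ((T ⋙ coyoneda.obj (Opposite.op X)) ≅
      ∐ fun i => coyoneda.obj (Opposite.op (P i)))

@[simps]
noncomputable def canonicalToOver [HasTerminal A] (T : A ⥤ B) : A ⥤ Over (T.obj (⊤_ A)) where
  obj a := Over.mk (T.map (terminal.from a))
  map {a a'} u := Over.homMk (T.map u) (by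
    dsimp
    rw [← T.map_comp]
    congr 1
    apply Subsingleton.elim)
  map_id a := by
    ext
    simp
  map_comp f g := by
    ext
    simp

/-- The explicit "coproduct of representables" functor. -/
@[simps, reducible]
def sigmaFunctor {ι : Type v} (P : ι → A) : A ⥤ Type v where
  obj a := Σ i, (P i ⟶ a)
  map u := TypeCat.ofHom fun x => ⟨x.1, x.2 ≫ u⟩
  map_id a := by ext ⟨i, f⟩ <;> simp
  map_comp f g := by ext ⟨i, f⟩ <;> simp

@[simp]
theorem sigmaFunctor_map_apply {ι : Type v} (P : ι → A) {a a' : A} (u : a ⟶ a')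
    (x : Σ i, (P i ⟶ a)) : (sigmaFunctor P).map u x = (⟨x.1, x.2 ≫ u⟩ : Σ i, (P i ⟶ a')) := rfl

@[simps]
def sigmaCocone {ι : Type v} (P : ι → A) :
    Cocone (Discrete.functor fun i => coyoneda.obj (Opposite.op (P i))) where
  pt := sigmaFunctor P
  ι := Discrete.natTrans fun i =>
    { app := fun a => TypeCat.ofHom fun h => ⟨i.as, h⟩
      naturality := by intro a a' u; ext h; rfl }

def sigmaIsColimit {ι : Type v} (P : ι → A) : IsColimit (sigmaCocone P) where
  desc s :=
    { app := fun a => TypeCat.ofHom fun (x : Σ i, (P i ⟶ a)) => (s.ι.app ⟨x.1⟩).app a x.2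
      naturality := by
        intro a a' u
        ext x
        exact types_congr_hom ((s.ι.app ⟨x.1⟩).naturality u) x.2 }
  fac s j := by
    obtain ⟨j⟩ := j
    ext a h
    rfl
  uniq s m hm := by
    ext a x
    exact types_congr_hom (congrFun (congrArg NatTrans.app (hm ⟨x.1⟩)) a) x.2

noncomputable def sigmaIso {ι : Type v} (P : ι → A) :
    (∐ fun i => coyoneda.obj (Opposite.op (P i))) ≅ sigmaFunctor P :=
  (colimit.isColimit _).coconePointUniqueUpToIso (sigmaIsColimit P)

theorem sigma_ext {ι : Type v} {P : ι → A} {a : A} (x : Σ i, (P i ⟶ a)) {j : ι}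
    (h : x.1 = j) : x = ⟨j, h ▸ x.2⟩ := by
  subst h; rfl

theorem cast_snd {ι : Type v} {P : ι → A} {a : A} {j : ι} {k : P j ⟶ a}
    (x : Σ i, (P i ⟶ a)) (hx : x = ⟨j, k⟩) (hp : x.1 = j) : hp ▸ x.2 = k := by
  subst hx; rfl

section Forward

variable [HasTerminal A] (T : A ⥤ B) {ι : B → Type v} {P : ∀ X : B, ι X → A}
variable (E : ∀ X : B, (T ⋙ coyoneda.obj (Opposite.op X)) ≅ sigmaFunctor (P X))

/-- Index invariance under postcomposition with the terminal map. -/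
theorem key (X : B) (a : A) (g : X ⟶ T.obj a) :
    (E X).hom.app (⊤_ A) (g ≫ T.map (terminal.from a)) =
      ⟨((E X).hom.app a g).1, terminal.from _⟩ := by
  have h := types_congr_hom ((E X).hom.naturality (terminal.from a)) g
  simp only [Functor.comp_map, Functor.flip_obj_map, yoneda_map_app, TypeCat.ofHom_apply, types_comp_apply, sigmaFunctor_map_apply] at h
  rw [h]
  exact congrArg (fun t => (⟨_, t⟩ : Σ i, (P X i ⟶ ⊤_ A))) (terminal.hom_ext _ _)

theorem fst_eq (Y : Over (T.obj (⊤_ A))) (a : A) (u : Y ⟶ (canonicalToOver T).obj a) :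
    ((E Y.left).hom.app a u.left).1 = ((E Y.left).hom.app (⊤_ A) Y.hom).1 := by
  have h2 : u.left ≫ T.map (terminal.from a) = Y.hom := by
    exact Over.w u
  have h1 := key T E Y.left a u.left
  erw [h2] at h1
  exact (congrArg Sigma.fst h1).symm

theorem hom_app_top (Y : Over (T.obj (⊤_ A))) :
    (E Y.left).hom.app (⊤_ A) Y.hom =
      ⟨((E Y.left).hom.app (⊤_ A) Y.hom).1, terminal.from _⟩ := by
  conv_lhs => rw [sigma_ext ((E Y.left).hom.app (⊤_ A) Y.hom) rfl]
  exact congrArg (fun t => (⟨_, t⟩ : Σ i, (P Y.left i ⟶ ⊤_ A))) (terminal.hom_ext _ _)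

noncomputable def eqv (Y : Over (T.obj (⊤_ A))) (a : A) :
    (P Y.left ((E Y.left).hom.app (⊤_ A) Y.hom).1 ⟶ a) ≃ (Y ⟶ (canonicalToOver T).obj a) where
  toFun h := Over.homMk ((E Y.left).inv.app a ⟨((E Y.left).hom.app (⊤_ A) Y.hom).1, h⟩) (by
    have h2 : (E Y.left).hom.app a
        ((E Y.left).inv.app a ⟨((E Y.left).hom.app (⊤_ A) Y.hom).1, h⟩) =
        ⟨((E Y.left).hom.app (⊤_ A) Y.hom).1, h⟩ :=
      types_congr_hom ((E Y.left).inv_hom_id_app a) _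
    have h1 := key T E Y.left a
      ((E Y.left).inv.app a ⟨((E Y.left).hom.app (⊤_ A) Y.hom).1, h⟩)
    rw [h2] at h1
    have h3 : (⟨((E Y.left).hom.app (⊤_ A) Y.hom).1, terminal.from _⟩ :
        Σ i, (P Y.left i ⟶ ⊤_ A)) =
        (E Y.left).hom.app (⊤_ A) Y.hom := (hom_app_top T E Y).symm
    rw [h3] at h1
    have h4 := congrArg ((E Y.left).inv.app (⊤_ A)) h1
    simp only [FunctorToTypes.hom_inv_id_app_apply] at h4
    exact h4)
  invFun u := fst_eq T E Y a u ▸ ((E Y.left).hom.app a u.left).2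
  left_inv h := by
    have h2 : (E Y.left).hom.app a
        ((E Y.left).inv.app a ⟨((E Y.left).hom.app (⊤_ A) Y.hom).1, h⟩) =
        ⟨((E Y.left).hom.app (⊤_ A) Y.hom).1, h⟩ :=
      types_congr_hom ((E Y.left).inv_hom_id_app a) _
    exact cast_snd _ h2 _
  right_inv u := by
    apply Over.OverMorphism.ext
    have h4 := (sigma_ext ((E Y.left).hom.app a u.left) (fst_eq T E Y a u)).symm
    show (E Y.left).inv.app a ⟨((E Y.left).hom.app (⊤_ A) Y.hom).1,
      fst_eq T E Y a u ▸ ((E Y.left).hom.app a u.left).2⟩ = u.left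
    rw [h4]
    exact types_congr_hom ((E Y.left).hom_inv_id_app a) u.left

theorem eqv_nat (Y : Over (T.obj (⊤_ A))) (a a' : A) (g : a ⟶ a')
    (h : P Y.left ((E Y.left).hom.app (⊤_ A) Y.hom).1 ⟶ a) :
    eqv T E Y a' (h ≫ g) = eqv T E Y a h ≫ (canonicalToOver T).map g := by
  apply Over.OverMorphism.ext
  have := types_congr_hom ((E Y.left).inv.naturality g) ⟨((E Y.left).hom.app (⊤_ A) Y.hom).1, h⟩
  simp only [Functor.comp_map, Functor.flip_obj_map, yoneda_map_app, TypeCat.ofHom_apply, types_comp_apply, sigmaFunctor_map_apply] at this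
  exact this

end Forward

section Backward

variable [HasTerminal A] {T : A ⥤ B} {L : Over (T.obj (⊤_ A)) ⥤ A}
variable (adj : L ⊣ canonicalToOver T)

noncomputable def backFun (X : B) (a : A)
    (x : Σ f : X ⟶ T.obj (⊤_ A), (L.obj (Over.mk f) ⟶ a)) : X ⟶ T.obj a :=
  ((adj.homEquiv (Over.mk x.1) a) x.2).left

noncomputable def backEqv (X : B) (a : A) :
    (Σ f : X ⟶ T.obj (⊤_ A), (L.obj (Over.mk f) ⟶ a)) ≃ (X ⟶ T.obj a) where
  toFun := backFun adj X a
  invFun g := ⟨g ≫ T.map (terminal.from a),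
    (adj.homEquiv (Over.mk (g ≫ T.map (terminal.from a))) a).symm (Over.homMk g (by rfl))⟩
  left_inv := by
    have inj : Function.Injective (backFun adj X a) := by
      rintro ⟨f, k⟩ ⟨f', k'⟩ hh
      simp only [backFun] at hh
      have hf : f = f' := by
        have w1 := Over.w ((adj.homEquiv (Over.mk f) a) k)
        have w2 := Over.w ((adj.homEquiv (Over.mk f') a) k')
        simp only [canonicalToOver_obj, Over.mk_hom] at w1 w2
        rw [← w1, ← w2]
        exact congrArg (fun t => t ≫ T.map (terminal.from a)) hh
      subst hf
      have : (adj.homEquiv (Over.mk f) a) k = (adj.homEquiv (Over.mk f) a) k' :=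
        Over.OverMorphism.ext hh
      rw [(adj.homEquiv (Over.mk f) a).injective this]
    intro x
    apply inj
    simp only [backFun, Equiv.apply_symm_apply, Over.homMk_left]
    exact congrArg Over.Hom.left ((adj.homEquiv _ a).apply_symm_apply _)
  right_inv g := by
    simp only [backFun, Equiv.apply_symm_apply, Over.homMk_left]
    rfl

noncomputable def backIso (X : B) :
    sigmaFunctor (fun f : X ⟶ T.obj (⊤_ A) => L.obj (Over.mk f)) ≅
      T ⋙ coyoneda.obj (Opposite.op X) :=
  NatIso.ofComponents (fun a => (backEqv adj X a).toIso) (by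
    intro a a' u
    ext x
    obtain ⟨f, k⟩ := x
    show ((adj.homEquiv (Over.mk f) a') (k ≫ u)).left =
      ((adj.homEquiv (Over.mk f) a) k).left ≫ T.map u
    rw [Adjunction.homEquiv_naturality_right]
    simp
    rfl)

end Backward

/-- When `A` has a terminal object, `T` is familial iff the canonical functor
`A ⥤ Over (T.obj ⊤)` has a left adjoint. -/
theorem familial_iff_canonicalToOver_leftAdjoint [HasTerminal A] (T : A ⥤ B) :
    IsFamilial T ↔ ∃ L : Over (T.obj (⊤_ A)) ⥤ A, Nonempty (L ⊣ canonicalToOver T) := by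
  constructor
  · intro h
    choose ι P e using h
    let E : ∀ X : B, (T ⋙ coyoneda.obj (Opposite.op X)) ≅ sigmaFunctor (P X) :=
      fun X => (e X).some ≪≫ sigmaIso (P X)
    exact ⟨Adjunction.leftAdjointOfEquiv (eqv T E) (eqv_nat T E),
      ⟨Adjunction.adjunctionOfEquivLeft (eqv T E) (eqv_nat T E)⟩⟩
  · rintro ⟨L, ⟨adj⟩⟩ X
    exact ⟨X ⟶ T.obj (⊤_ A), fun f => L.obj (Over.mk f),
      ⟨(backIso adj X).symm ≪≫ (sigmaIso _).symm⟩⟩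

end Familial
end
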